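/- Let p ≥ 2 be an integer and μ a strongly mixing T_p-invariant Borel probability measure on 𝕋 which is non-atomic. If there exist a nonzero integer l and infinitely many j ∈ ℕ such that μ is T_{p^j+l}-invariant, then μ̂(k) = 0 for every nonzero integer k, i.e., μ is the Lebesgue measure. -/

import Mathlib

open MeasureTheory Filter

/-- The circle ℝ/ℤ. -/
abbrev Torus : Type := AddCircle (1 : ℝ)

/-- The times-`q` map `x ↦ qx` on ℝ/ℤ. -/
noncomputable def timesMap (q : ℤ) : Torus → Torus := fun x => q • x

/-- The `k`-th Fourier coefficient of a measure on ℝ/ℤ. -/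
noncomputable def fc (μ : Measure Torus) (k : ℤ) : ℂ :=
  ∫ x : Torus, fourier k x ∂μ

/-- A Følner sequence of finite subsets of ℕ. -/
def IsFolner (F : ℕ → Finset ℕ) : Prop :=
  (∀ n, (F n).Nonempty) ∧ ∀ m : ℕ, Tendsto
    (fun n => ((symmDiff ((F n).image (· + m)) (F n)).card : ℝ) / (F n).card)
    atTop (nhds 0)

/-!
For `k ≠ 0` and `j ∈ A`, invariance under `T_{p^j+l}` gives
`μ̂(k) = μ̂(k p^j + k l) = ∫ e_k ∘ T_p^j · e_{kl} dμ`, and strong mixing of `T_p` makes the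
right-hand side tend to `μ̂(k) μ̂(kl)` as `j → ∞` in `A`, so `μ̂(k) = μ̂(k) μ̂(kl)`.
If `μ̂(kl) = 1`, the unimodular function `e_{kl}` would be `1` almost everywhere (strict convexity
of the disc), so `μ` would be carried by the finite `kl`-torsion subgroup of `𝕋`, contradicting
non-atomicity. Hence `μ̂(k) = 0`, and since trigonometric polynomials are dense in `C(𝕋)`,
`μ` is Lebesgue measure.
-/

open Topology

lemma norm_mul_sub_mul_le_of_norm_le_one {R : Type*} [SeminormedRing R] {a b a' b' : R}
    (hb : ‖b‖ ≤ 1) (ha' : ‖a'‖ ≤ 1) : ‖a * b - a' * b'‖ ≤ ‖a - a'‖ + ‖b - b'‖ :=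
  calc ‖a * b - a' * b'‖ = ‖(a - a') * b + a' * (b - b')‖ := by noncomm_ring
    _ ≤ ‖a - a'‖ * ‖b‖ + ‖a'‖ * ‖b - b'‖ :=
      (norm_add_le _ _).trans (add_le_add (norm_mul_le _ _) (norm_mul_le _ _))
    _ ≤ ‖a - a'‖ * 1 + 1 * ‖b - b'‖ := by gcongr
    _ = ‖a - a'‖ + ‖b - b'‖ := by ring

lemma tendsto_of_forall_approx {ι X : Type*} [PseudoMetricSpace X] {l : Filter ι}
    {u : ι → X} {a : X}
    (h : ∀ ε > 0, ∃ v : ι → X, ∃ b, Tendsto v l (𝓝 b) ∧ (∀ i, dist (u i) (v i) ≤ ε) ∧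
      dist a b ≤ ε) :
    Tendsto u l (𝓝 a) := by
  refine Metric.tendsto_nhds.2 fun ε hε => ?_
  obtain ⟨v, b, hvb, huv, hab⟩ := h (ε / 3) (by positivity)
  filter_upwards [Metric.tendsto_nhds.1 hvb (ε / 3) (by positivity)] with i hi
  calc dist (u i) a ≤ dist (u i) (v i) + dist (v i) b + dist b a := dist_triangle4 _ _ _ _
    _ < ε := by linarith [huv i, dist_comm a b]

section Approximation

variable {α : Type*} [MeasurableSpace α] {μ : Measure α}

lemma exists_simpleFunc_norm_le_one_integral_norm_sub_le {E : Type*} [NormedAddCommGroup E]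
    [MeasurableSpace E] [OpensMeasurableSpace E] [SecondCountableTopology E]
    [IsFiniteMeasure μ] {f : α → E} (hf : Measurable f) (hf1 : ∀ x, ‖f x‖ ≤ 1)
    {ε : ℝ} (hε : 0 < ε) :
    ∃ s : SimpleFunc α E, (∀ x, ‖s x‖ ≤ 1) ∧ ∫ x, ‖s x - f x‖ ∂μ ≤ ε := by
  have h₀ : (0 : E) ∈ Metric.closedBall (0 : E) 1 := Metric.mem_closedBall_self zero_le_one
  have hfint : Integrable f μ := .of_bound hf.aestronglyMeasurable 1 (ae_of_all _ hf1)
  have hlim := SimpleFunc.tendsto_approxOn_L1_enorm hf h₀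
    (ae_of_all _ fun x => subset_closure (by simpa using hf1 x)) (by simpa using hfint.2)
  obtain ⟨n, hn⟩ := (hlim.eventually (gt_mem_nhds (ENNReal.ofReal_pos.2 hε))).exists
  set s := SimpleFunc.approxOn f hf (Metric.closedBall 0 1) 0 h₀ n
  refine ⟨s, fun x => by simpa using SimpleFunc.approxOn_mem hf h₀ n x, ?_⟩
  rw [← ENNReal.ofReal_le_ofReal_iff hε.le, ofReal_integral_norm_eq_lintegral_enorm
    (f := fun x => s x - f x) ((s.integrable_of_isFiniteMeasure).sub hfint)]
  exact hn.le

lemma dist_integral_mul_le [IsFiniteMeasure μ] {u v u' v' : α → ℂ}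
    (hu : Measurable u) (hv : Measurable v) (hu' : Measurable u') (hv' : Measurable v')
    (hu1 : ∀ x, ‖u x‖ ≤ 1) (hv1 : ∀ x, ‖v x‖ ≤ 1) (hu'1 : ∀ x, ‖u' x‖ ≤ 1)
    (hv'1 : ∀ x, ‖v' x‖ ≤ 1) :
    dist (∫ x, u x * v x ∂μ) (∫ x, u' x * v' x ∂μ) ≤
      ∫ x, ‖u x - u' x‖ ∂μ + ∫ x, ‖v x - v' x‖ ∂μ := by
  have hint : ∀ w : α → ℂ, Measurable w → (∀ x, ‖w x‖ ≤ 1) → Integrable w μ :=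
    fun w hw hw1 => .of_bound hw.aestronglyMeasurable 1 (ae_of_all _ hw1)
  have hprod : ∀ w w' : α → ℂ, Measurable w → Measurable w' → (∀ x, ‖w x‖ ≤ 1) →
      (∀ x, ‖w' x‖ ≤ 1) → Integrable (fun x => w x * w' x) μ :=
    fun w w' hw hw' hw1 hw'1 => (hint w' hw' hw'1).bdd_mul hw.aestronglyMeasurable (ae_of_all _ hw1)
  have hdu : Integrable (fun x => ‖u x - u' x‖) μ := ((hint u hu hu1).sub (hint u' hu' hu'1)).norm
  have hdv : Integrable (fun x => ‖v x - v' x‖) μ := ((hint v hv hv1).sub (hint v' hv' hv'1)).norm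
  rw [dist_eq_norm, ← integral_sub (hprod u v hu hv hu1 hv1) (hprod u' v' hu' hv' hu'1 hv'1),
    ← integral_add hdu hdv]
  exact norm_integral_le_of_norm_le (hdu.add hdv)
    (ae_of_all _ fun x => norm_mul_sub_mul_le_of_norm_le_one (hv1 x) (hu'1 x))

lemma norm_integral_le_one {E : Type*} [NormedAddCommGroup E] [NormedSpace ℝ E]
    [IsProbabilityMeasure μ] {u : α → E} (hu1 : ∀ x, ‖u x‖ ≤ 1) :
    ‖∫ x, u x ∂μ‖ ≤ 1 := by
  simpa using norm_integral_le_of_norm_le_const (μ := μ) (ae_of_all _ hu1)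

lemma dist_integral_mul_integral_le [IsProbabilityMeasure μ] {u v u' v' : α → ℂ}
    (hu : Measurable u) (hv : Measurable v) (hu' : Measurable u') (hv' : Measurable v')
    (hu1 : ∀ x, ‖u x‖ ≤ 1) (hv1 : ∀ x, ‖v x‖ ≤ 1) (hu'1 : ∀ x, ‖u' x‖ ≤ 1)
    (hv'1 : ∀ x, ‖v' x‖ ≤ 1) :
    dist ((∫ x, u x ∂μ) * ∫ x, v x ∂μ) ((∫ x, u' x ∂μ) * ∫ x, v' x ∂μ) ≤
      ∫ x, ‖u x - u' x‖ ∂μ + ∫ x, ‖v x - v' x‖ ∂μ := by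
  have hint : ∀ w : α → ℂ, Measurable w → (∀ x, ‖w x‖ ≤ 1) → Integrable w μ :=
    fun w hw hw1 => .of_bound hw.aestronglyMeasurable 1 (ae_of_all _ hw1)
  have hdiff : ∀ w w' : α → ℂ, Measurable w → Measurable w' → (∀ x, ‖w x‖ ≤ 1) →
      (∀ x, ‖w' x‖ ≤ 1) → ‖∫ x, w x ∂μ - ∫ x, w' x ∂μ‖ ≤ ∫ x, ‖w x - w' x‖ ∂μ :=
    fun w w' hw hw' hw1 hw'1 => by
      rw [← integral_sub (hint w hw hw1) (hint w' hw' hw'1)]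
      exact norm_integral_le_integral_norm _
  rw [dist_eq_norm]
  exact (norm_mul_sub_mul_le_of_norm_le_one (norm_integral_le_one hv1)
    (norm_integral_le_one hu'1)).trans
    (add_le_add (hdiff u u' hu hu' hu1 hu'1) (hdiff v v' hv hv' hv1 hv'1))

end Approximation

section Mixing

variable {α ι : Type*} [MeasurableSpace α]

/-- Strong mixing of `μ` along the family `T`; for `T i = S^[i]` and `l = atTop` this is strong
mixing of `S`. -/
def IsMixingAlong (μ : Measure α) (T : ι → α → α) (l : Filter ι) : Prop :=
  ∀ A B : Set α, MeasurableSet A → MeasurableSet B →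
    Tendsto (fun i => μ (T i ⁻¹' A ∩ B)) l (𝓝 (μ A * μ B))

variable {μ : Measure α} {T : ι → α → α} {l : Filter ι}

namespace IsMixingAlong

lemma tendsto_integral_indicator_comp_mul [IsFiniteMeasure μ] (h : IsMixingAlong μ T l)
    (hT : ∀ i, Measurable (T i)) {A B : Set α} (hA : MeasurableSet A) (hB : MeasurableSet B)
    (c d : ℂ) :
    Tendsto (fun i => ∫ x, A.indicator (fun _ => c) (T i x) * B.indicator (fun _ => d) x ∂μ) l
      (𝓝 ((∫ x, A.indicator (fun _ => c) x ∂μ) * ∫ x, B.indicator (fun _ => d) x ∂μ)) := by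
  have hprod : ∀ i, (fun x => A.indicator (fun _ => c) (T i x) * B.indicator (fun _ => d) x) =
      (T i ⁻¹' A ∩ B).indicator (fun _ => c * d) := fun i => by
    ext x
    by_cases hx : T i x ∈ A <;> by_cases hx' : x ∈ B <;> simp [hx, hx']
  simp only [hprod, integral_indicator_const _ hA, integral_indicator_const _ hB,
    integral_indicator_const _ ((hT _ hA).inter hB), measureReal_def, Complex.real_smul]
  have hreal := (ENNReal.tendsto_toReal (ENNReal.mul_ne_top (measure_ne_top μ A)
    (measure_ne_top μ B))).comp (h A B hA hB)
  have hlim : ((μ A).toReal : ℂ) * c * ((μ B).toReal * d) = (μ A * μ B).toReal * (c * d) := by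
    rw [ENNReal.toReal_mul, Complex.ofReal_mul]
    ring
  rw [hlim]
  exact ((Complex.continuous_ofReal.tendsto _).comp hreal).mul_const (c * d)

lemma tendsto_integral_simpleFunc_comp_mul [IsFiniteMeasure μ] (h : IsMixingAlong μ T l)
    (hT : ∀ i, Measurable (T i)) (f g : SimpleFunc α ℂ) :
    Tendsto (fun i => ∫ x, f (T i x) * g x ∂μ) l (𝓝 ((∫ x, f x ∂μ) * ∫ x, g x ∂μ)) := by
  have hint : ∀ (u v : SimpleFunc α ℂ) i, Integrable (fun x => u (T i x) * v x) μ :=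
    fun u v i => ((u.comp (T i) (hT i)) * v).integrable_of_isFiniteMeasure
  induction f using SimpleFunc.induction generalizing g with
  | const c hA =>
    induction g using SimpleFunc.induction with
    | const d hB =>
      simp only [SimpleFunc.coe_piecewise, SimpleFunc.coe_const, Function.const_zero,
        Set.piecewise_eq_indicator]
      exact h.tendsto_integral_indicator_comp_mul hT hA hB c d
    | add _ ih₁ ih₂ =>
      convert ih₁.add ih₂ using 1
      · ext i
        simp only [SimpleFunc.coe_add, Pi.add_apply, mul_add]
        exact integral_add (hint _ _ i) (hint _ _ i)
      · simp only [SimpleFunc.coe_add, Pi.add_apply]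
        rw [integral_add (SimpleFunc.integrable_of_isFiniteMeasure _)
          (SimpleFunc.integrable_of_isFiniteMeasure _), mul_add]
  | add _ ih₁ ih₂ =>
    convert (ih₁ g).add (ih₂ g) using 1
    · ext i
      simp only [SimpleFunc.coe_add, Pi.add_apply, add_mul]
      exact integral_add (hint _ _ i) (hint _ _ i)
    · simp only [SimpleFunc.coe_add, Pi.add_apply]
      rw [integral_add (SimpleFunc.integrable_of_isFiniteMeasure _)
        (SimpleFunc.integrable_of_isFiniteMeasure _), add_mul]

/-- Invariance is what lets a single `L¹`-approximation of `f` by a simple function serve for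
every `f ∘ T i`. -/
lemma tendsto_integral_comp_mul [IsProbabilityMeasure μ] (h : IsMixingAlong μ T l)
    (hT : ∀ i, MeasurePreserving (T i) μ μ) {f g : α → ℂ} (hf : Measurable f)
    (hg : Measurable g) (hf1 : ∀ x, ‖f x‖ ≤ 1) (hg1 : ∀ x, ‖g x‖ ≤ 1) :
    Tendsto (fun i => ∫ x, f (T i x) * g x ∂μ) l (𝓝 ((∫ x, f x ∂μ) * ∫ x, g x ∂μ)) := by
  have hTm : ∀ i, Measurable (T i) := fun i => (hT i).measurable
  refine tendsto_of_forall_approx fun ε hε => ?_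
  obtain ⟨s, hs1, hsf⟩ :=
    exists_simpleFunc_norm_le_one_integral_norm_sub_le (μ := μ) hf hf1 (half_pos hε)
  obtain ⟨t, ht1, htg⟩ :=
    exists_simpleFunc_norm_le_one_integral_norm_sub_le (μ := μ) hg hg1 (half_pos hε)
  refine ⟨_, _, h.tendsto_integral_simpleFunc_comp_mul hTm s t, fun i => ?_, ?_⟩
  · have hmeas : AEStronglyMeasurable (fun y => ‖s y - f y‖) (μ.map (T i)) := by
      rw [(hT i).map_eq]
      exact (s.measurable.sub hf).norm.aestronglyMeasurable
    have hcomp : ∫ x, ‖s (T i x) - f (T i x)‖ ∂μ = ∫ x, ‖s x - f x‖ ∂μ := by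
      rw [← integral_map (hT i).aemeasurable hmeas, (hT i).map_eq]
    rw [dist_comm]
    calc _ ≤ ∫ x, ‖s (T i x) - f (T i x)‖ ∂μ + ∫ x, ‖t x - g x‖ ∂μ :=
          dist_integral_mul_le (s.measurable.comp (hTm i)) t.measurable (hf.comp (hTm i)) hg
            (fun x => hs1 _) ht1 (fun x => hf1 _) hg1
      _ ≤ ε := by linarith [hcomp]
  · rw [dist_comm]
    calc _ ≤ ∫ x, ‖s x - f x‖ ∂μ + ∫ x, ‖t x - g x‖ ∂μ :=
          dist_integral_mul_integral_le s.measurable t.measurable hf hg hs1 ht1 hf1 hg1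
      _ ≤ ε := by linarith

end IsMixingAlong

end Mixing

section Compact

variable {X : Type*} [TopologicalSpace X] [CompactSpace X] [MeasurableSpace X] [BorelSpace X]

noncomputable def ContinuousMap.integralCLM (μ : Measure X) [IsFiniteMeasure μ] :
    C(X, ℂ) →L[ℂ] ℂ :=
  (L1.integralCLM' ℂ).comp (ContinuousMap.toLp 1 μ ℂ)

lemma ContinuousMap.integralCLM_apply (μ : Measure X) [IsFiniteMeasure μ] (g : C(X, ℂ)) :
    ContinuousMap.integralCLM μ g = ∫ x, g x ∂μ := by
  rw [integralCLM, ContinuousLinearMap.comp_apply, ← L1.integral_eq', L1.integral_eq_integral]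
  exact integral_congr_ae (ContinuousMap.coeFn_toLp _ g)

end Compact

lemma fourier_apply_eq_one_iff (m : ℤ) (x : Torus) : fourier m x = 1 ↔ m • x = 0 := by
  rw [fourier_apply, Circle.coe_eq_one, ← AddCircle.toCircle_zero,
    (AddCircle.injective_toCircle one_ne_zero).eq_iff]

lemma fourier_timesMap (k q : ℤ) (x : Torus) : fourier k (timesMap q x) = fourier (k * q) x := by
  rw [timesMap, fourier_apply, fourier_apply, mul_smul]

lemma timesMap_iterate (q : ℤ) (j : ℕ) : (timesMap q)^[j] = timesMap (q ^ j) := by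
  induction j with
  | zero => funext x; simp [timesMap]
  | succ j ih =>
    funext x
    rw [Function.iterate_succ_apply', ih, timesMap, timesMap, timesMap, pow_succ', mul_smul]

lemma measurable_timesMap (q : ℤ) : Measurable (timesMap q) :=
  (continuous_zsmul q).measurable

lemma fc_map_timesMap (μ : Measure Torus) (q k : ℤ) :
    fc (μ.map (timesMap q)) k = fc μ (k * q) := by
  rw [fc, integral_map (measurable_timesMap q).aemeasurable (map_continuous _).aestronglyMeasurable]
  simp only [fourier_timesMap, fc]

lemma fc_zero (μ : Measure Torus) : fc μ 0 = μ.real Set.univ := by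
  simp [fc]

lemma fc_volume {k : ℤ} (hk : k ≠ 0) : fc volume k = 0 := by
  have h := congrFun (fourierCoeff_fourier (T := 1) k) 0
  rw [Pi.single_eq_of_ne (Ne.symm hk)] at h
  rw [← h, fourierCoeff, AddCircle.volume_eq_smul_haarAddCircle, fc]
  simp

lemma fc_ne_one_of_ne_zero {μ : Measure Torus} [IsProbabilityMeasure μ] [NullSingletonClass μ]
    {m : ℤ} (hm : m ≠ 0) : fc μ m ≠ 1 := by
  intro h
  have hae : ∀ᵐ x ∂μ, fourier m x = 1 := by
    have hle : ∀ᵐ x ∂μ, ‖fourier m x‖ ≤ 1 := ae_of_all _ fun x => (Circle.norm_coe _).le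
    have := (ae_eq_const_or_norm_integral_lt_of_norm_le_const hle).resolve_right
      (by rw [← fc, h]; simp)
    rwa [average_eq_integral, ← fc, h] at this
  have htors : {x : Torus | m • x = 0}.Finite := by
    simpa only [natAbs_nsmul_eq_zero] using AddCircle.finite_torsion 1 (Int.natAbs_pos.2 hm)
  obtain ⟨x, hx, hx'⟩ := (hae.and (measure_eq_zero_iff_ae_notMem.1 (htors.measure_zero μ))).exists
  exact hx' ((fourier_apply_eq_one_iff m x).1 hx)

lemma integral_eq_of_fc_eq {μ ν : Measure Torus} [IsFiniteMeasure μ] [IsFiniteMeasure ν]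
    (h : fc μ = fc ν) (g : C(Torus, ℂ)) : ∫ x, g x ∂μ = ∫ x, g x ∂ν := by
  let D := ContinuousMap.integralCLM μ - ContinuousMap.integralCLM ν
  have hspan : Submodule.span ℂ (Set.range fourier) ≤ D.ker := by
    rw [Submodule.span_le]
    rintro _ ⟨k, rfl⟩
    rw [SetLike.mem_coe, LinearMap.mem_ker, ContinuousLinearMap.coe_coe, sub_apply, sub_eq_zero,
      ContinuousMap.integralCLM_apply, ContinuousMap.integralCLM_apply]
    exact congrFun h k
  have hg : g ∈ D.ker := Submodule.topologicalClosure_minimal _ hspan D.isClosed_ker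
    (by rw [span_fourier_closure_eq_top]; trivial)
  rwa [LinearMap.mem_ker, ContinuousLinearMap.coe_coe, sub_apply, sub_eq_zero,
    ContinuousMap.integralCLM_apply, ContinuousMap.integralCLM_apply] at hg

lemma eq_of_fc_eq {μ ν : Measure Torus} [IsFiniteMeasure μ] [IsFiniteMeasure ν]
    (h : fc μ = fc ν) : μ = ν := by
  refine ext_of_forall_integral_eq_of_IsFiniteMeasure fun f => ?_
  have := integral_eq_of_fc_eq h ⟨fun x => (f x : ℂ), by fun_prop⟩
  simpa only [ContinuousMap.coe_mk, integral_complex_ofReal, Complex.ofReal_inj] using this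

lemma eq_volume_of_fc_eq_zero {μ : Measure Torus} [IsProbabilityMeasure μ]
    (h : ∀ k : ℤ, k ≠ 0 → fc μ k = 0) : μ = volume := by
  refine eq_of_fc_eq (funext fun k => ?_)
  rcases eq_or_ne k 0 with rfl | hk
  · simp [fc_zero, measureReal_def, AddCircle.measure_univ]
  · rw [h k hk, fc_volume hk]

theorem stmt17_general (p : ℤ) (μ : Measure Torus) [IsProbabilityMeasure μ]
    [NullSingletonClass μ]
    (hinv : MeasurePreserving (timesMap p) μ μ)
    (hsm : ∀ A B : Set Torus, MeasurableSet A → MeasurableSet B →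
      Tendsto (fun j => μ ((timesMap p)^[j] ⁻¹' A ∩ B)) atTop (nhds (μ A * μ B)))
    (l : ℤ) (hl : l ≠ 0) (A : Set ℕ) (hA : A.Infinite)
    (hinvA : ∀ j ∈ A, Measure.map (timesMap (p ^ j + l)) μ = μ) :
    (∀ k : ℤ, k ≠ 0 → fc μ k = 0) ∧ μ = volume := by
  have hfc : ∀ k : ℤ, k ≠ 0 → fc μ k = 0 := by
    intro k hk
    have hcorr : ∀ j ∈ A,
        ∫ x, fourier k ((timesMap p)^[j] x) * fourier (k * l) x ∂μ = fc μ k := by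
      intro j hj
      conv_rhs => rw [← hinvA j hj]
      rw [fc_map_timesMap, mul_add, fc, timesMap_iterate]
      simp only [fourier_timesMap, fourier_add]
    have hmix := IsMixingAlong.tendsto_integral_comp_mul (T := fun j => (timesMap p)^[j]) hsm
      hinv.iterate (map_continuous (fourier k)).measurable
      (map_continuous (fourier (k * l))).measurable
      (fun x => (Circle.norm_coe _).le) (fun x => (Circle.norm_coe _).le)
    have hprod : fc μ k * fc μ (k * l) = fc μ k :=
      tendsto_nhds_unique_of_frequently_eq hmix tendsto_const_nhds
        ((Nat.frequently_atTop_iff_infinite.2 hA).mono hcorr)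
    by_contra hne
    exact fc_ne_one_of_ne_zero (mul_ne_zero hk hl) ((mul_eq_left₀ hne).1 hprod)
  exact ⟨hfc, eq_volume_of_fc_eq_zero hfc⟩

theorem stmt17 (p : ℤ) (hp : 2 ≤ p) (μ : Measure Torus) [IsProbabilityMeasure μ]
    [NullSingletonClass μ]
    (hinv : MeasurePreserving (timesMap p) μ μ)
    (hsm : ∀ A B : Set Torus, MeasurableSet A → MeasurableSet B →
      Tendsto (fun j => μ ((timesMap p)^[j] ⁻¹' A ∩ B)) atTop (nhds (μ A * μ B)))
    (l : ℤ) (hl : l ≠ 0) (A : Set ℕ) (hA : A.Infinite)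
    (hinvA : ∀ j ∈ A, Measure.map (timesMap (p ^ j + l)) μ = μ) :
    (∀ k : ℤ, k ≠ 0 → fc μ k = 0) ∧ μ = volume :=
  stmt17_general p μ hinv hsm l hl A hA hinvA
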